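/- arXiv:2403.14128 — 8 statements merged into one kernel-verified Lean document; each statement's English description precedes it below -/
import Mathlib

section
/- (Lemma: Left Join via Outer Union and Subsumption.) Let T1 and T2 be tables with schemas S1 and S2 and common columns C = S1 ∩ S2 with C nonempty. Assume T1 and T2 are each in minimal form and every tuple of T1 and of T2 is non-null on every attribute of C. Then T1 ⟕ T2 = β((T1 ⋈ T2) ⊎ T1). -/
/- A tuple is a function from attributes to optional values (`none` = null). -/
variable {A V : Type*} [DecidableEq A] [DecidableEq V]

/-- Tuple `t1` subsumes tuple `t2`. -/
def Subsumes (t1 t2 : A → Option V) : Prop :=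
  (∀ a, t2 a ≠ none → t1 a = t2 a) ∧ ∃ a, t1 a ≠ none ∧ t2 a = none

/-- The subsumption operator β: tuples of `T` not subsumed by any tuple of `T`. -/
def beta (T : Set (A → Option V)) : Set (A → Option V) :=
  {t ∈ T | ¬ ∃ t' ∈ T, Subsumes t' t}

/-- Complementary tuples. -/
def Complementary (t1 t2 : A → Option V) : Prop :=
  (∃ a, t1 a = t2 a ∧ t1 a ≠ none) ∧
  (∀ a, t1 a ≠ none → t2 a ≠ none → t1 a = t2 a) ∧
  (∃ a, t1 a ≠ none ∧ t2 a = none) ∧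
  (∃ a, t2 a ≠ none ∧ t1 a = none)

/-- The complementation (merge) of two tuples. -/
def mergeT (t1 t2 : A → Option V) : A → Option V :=
  fun a => match t1 a with
    | some v => some v
    | none => t2 a

/-- A table `T` has schema `S`: every tuple is null outside `S`. -/
def HasSchema (T : Set (A → Option V)) (S : Set A) : Prop :=
  ∀ t ∈ T, ∀ a ∉ S, t a = none

/-- Tuples are joinable on common columns `C`. -/
def Joinable (C : Set A) (t1 t2 : A → Option V) : Prop :=
  ∀ a ∈ C, t1 a = t2 a ∧ t1 a ≠ none

/-- Inner join on common columns `C`. -/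
def innerJoin (C : Set A) (T1 T2 : Set (A → Option V)) : Set (A → Option V) :=
  {t | ∃ t1 ∈ T1, ∃ t2 ∈ T2, Joinable C t1 t2 ∧ t = mergeT t1 t2}

/-- Left outer join on common columns `C`. -/
def leftJoin (C : Set A) (T1 T2 : Set (A → Option V)) : Set (A → Option V) :=
  innerJoin C T1 T2 ∪ {t1 ∈ T1 | ¬ ∃ t2 ∈ T2, Joinable C t1 t2}

/-- Full outer join on common columns `C`. -/
def fullJoin (C : Set A) (T1 T2 : Set (A → Option V)) : Set (A → Option V) :=
  innerJoin C T1 T2 ∪ {t1 ∈ T1 | ¬ ∃ t2 ∈ T2, Joinable C t1 t2}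
    ∪ {t2 ∈ T2 | ¬ ∃ t1 ∈ T1, Joinable C t1 t2}

/-- A table is in minimal form: no tuple subsumes another, no two tuples are complementary. -/
def MinimalForm (T : Set (A → Option V)) : Prop :=
  (∀ t1 ∈ T, ∀ t2 ∈ T, ¬ Subsumes t1 t2) ∧
  (∀ t1 ∈ T, ∀ t2 ∈ T, ¬ Complementary t1 t2)

/-- Left Join via Outer Union and Subsumption:
`T1 ⟕ T2 = β((T1 ⋈ T2) ⊎ T1)`. -/
theorem leftJoin_eq_beta_outerUnion
    (T1 T2 : Set (A → Option V)) (S1 S2 : Set A)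
    (hfin1 : T1.Finite) (hfin2 : T2.Finite)
    (hs1 : HasSchema T1 S1) (hs2 : HasSchema T2 S2)
    (hC : (S1 ∩ S2).Nonempty)
    (hmin1 : MinimalForm T1) (hmin2 : MinimalForm T2)
    (hnn1 : ∀ t ∈ T1, ∀ a ∈ S1 ∩ S2, t a ≠ none)
    (hnn2 : ∀ t ∈ T2, ∀ a ∈ S1 ∩ S2, t a ≠ none) :
    leftJoin (S1 ∩ S2) T1 T2 = beta (innerJoin (S1 ∩ S2) T1 T2 ∪ T1) := by
  have mergeL : ∀ (u v : A → Option V) (a : A), u a ≠ none → mergeT u v a = u a := by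
    intro u v a h
    unfold mergeT
    cases hu : u a with
    | none => exact absurd hu h
    | some x => simp
  have mergeR : ∀ (u v : A → Option V) (a : A), u a = none → mergeT u v a = v a := by
    intro u v a h
    unfold mergeT
    rw [h]
  ext t
  constructor
  · rintro (⟨t1, hm1, t2, hm2, hj, rfl⟩ | ⟨ht1, hnoj⟩)
    · refine ⟨Or.inl ⟨t1, hm1, t2, hm2, hj, rfl⟩, ?_⟩
      rintro ⟨t', ht', hag, a0, ha0ne, ha0n⟩
      have ht1a0 : t1 a0 = none := by
        by_contra h
        rw [mergeL t1 t2 a0 h] at ha0n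
        exact h ha0n
      have ht2a0 : t2 a0 = none := by
        rw [mergeR t1 t2 a0 ht1a0] at ha0n
        exact ha0n
      rcases ht' with (⟨s1, hn1, s2, hn2, hjs, rfl⟩ | ht'1)
      · -- t' = merge s1 s2
        have hs1t1 : ∀ a, t1 a ≠ none → s1 a = t1 a := by
          intro a ha
          have hta : mergeT t1 t2 a = t1 a := mergeL _ _ _ ha
          have h' := hag a (by rw [hta]; exact ha)
          by_cases hs1a : s1 a = none
          · exfalso
            have haS1 : a ∈ S1 := by
              by_contra hn; exact ha (hs1 t1 hm1 a hn)
            have ht'a : mergeT s1 s2 a = s2 a := mergeR _ _ _ hs1a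
            have hs2a : s2 a ≠ none := by rw [← ht'a, h', hta]; exact ha
            have haS2 : a ∈ S2 := by
              by_contra hn; exact hs2a (hs2 s2 hn2 a hn)
            exact (hnn1 s1 hn1 a ⟨haS1, haS2⟩) hs1a
          · rw [← mergeL s1 s2 a hs1a, h', hta]
        have hs1a0 : s1 a0 = none := by
          by_contra h
          exact hmin1.1 s1 hn1 t1 hm1 ⟨hs1t1, a0, h, ht1a0⟩
        have hs2a0 : s2 a0 ≠ none := by
          rw [← mergeR s1 s2 a0 hs1a0]
          exact ha0ne
        have hs2t2 : ∀ a, t2 a ≠ none → s2 a = t2 a := by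
          intro a ha
          have haS2 : a ∈ S2 := by
            by_contra hn; exact ha (hs2 t2 hm2 a hn)
          have hta : mergeT t1 t2 a = t2 a := by
            by_cases h1 : t1 a = none
            · exact mergeR _ _ _ h1
            · have haS1 : a ∈ S1 := by
                by_contra hn; exact h1 (hs1 t1 hm1 a hn)
              rw [mergeL _ _ _ h1]
              exact (hj a ⟨haS1, haS2⟩).1
          have h' := hag a (by rw [hta]; exact ha)
          by_cases hs2a : s2 a = none
          · exfalso
            have hs1a : s1 a ≠ none := by
              intro h0
              have hmn : mergeT s1 s2 a = none := by
                rw [mergeR _ _ _ h0]; exact hs2a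
              rw [h', hta] at hmn
              exact ha hmn
            have haS1 : a ∈ S1 := by
              by_contra hn; exact hs1a (hs1 s1 hn1 a hn)
            have := (hjs a ⟨haS1, haS2⟩).1
            rw [hs2a] at this
            exact hs1a this
          · by_cases hs1a : s1 a = none
            · rw [← mergeR s1 s2 a hs1a, h', hta]
            · have haS1 : a ∈ S1 := by
                by_contra hn; exact hs1a (hs1 s1 hn1 a hn)
              rw [← (hjs a ⟨haS1, haS2⟩).1, ← mergeL s1 s2 a hs1a, h', hta]
        exact hmin2.1 s2 hn2 t2 hm2 ⟨hs2t2, a0, hs2a0, ht2a0⟩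
      · -- t' ∈ T1
        have hs : ∀ a, t1 a ≠ none → t' a = t1 a := by
          intro a ha
          rw [← mergeL t1 t2 a ha]
          exact hag a (by rw [mergeL t1 t2 a ha]; exact ha)
        exact hmin1.1 t' ht'1 t1 hm1 ⟨hs, a0, ha0ne, ht1a0⟩
    · refine ⟨Or.inr ht1, ?_⟩
      rintro ⟨t', ht', hag, a0, ha0ne, ha0n⟩
      rcases ht' with (⟨s1, hn1, s2, hn2, hjs, rfl⟩ | ht'1)
      · apply hnoj
        refine ⟨s2, hn2, fun a haC => ?_⟩
        have hta : t a ≠ none := hnn1 t ht1 a haC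
        have h' := hag a hta
        have hj1 := hjs a haC
        refine ⟨?_, hta⟩
        rw [← h', mergeL _ _ _ hj1.2, hj1.1]
      · exact hmin1.1 t' ht'1 t ht1 ⟨hag, a0, ha0ne, ha0n⟩
  · rintro ⟨(hin | ht1), hns⟩
    · exact Or.inl hin
    · by_cases hj : ∃ t2 ∈ T2, Joinable (S1 ∩ S2) t t2
      · obtain ⟨t2, hm2, hjt⟩ := hj
        by_cases hex : ∃ a, t a = none ∧ t2 a ≠ none
        · exfalso
          obtain ⟨a0, h0, h0'⟩ := hex
          apply hns
          refine ⟨mergeT t t2, Or.inl ⟨t, ht1, t2, hm2, hjt, rfl⟩,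
            fun a ha => mergeL _ _ _ ha, a0, ?_, h0⟩
          rw [mergeR _ _ _ h0]
          exact h0'
        · have hmt : mergeT t t2 = t := by
            funext a
            by_cases h1 : t a = none
            · rw [mergeR _ _ _ h1, h1]
              by_contra h2
              exact hex ⟨a, h1, h2⟩
            · exact mergeL _ _ _ h1
          exact Or.inl ⟨t, ht1, t2, hm2, hjt, hmt.symm⟩
      · exact Or.inr ⟨ht1, hj⟩
end

section
/- (Lemma: Full Outer Join via Outer Union and Subsumption.) Let T1 and T2 be tables with schemas S1 and S2 and common columns C = S1 ∩ S2 with C nonempty. Assume T1 and T2 are each in minimal form and every tuple of T1 and of T2 is non-null on every attribute of C. Then T1 ⟗ T2 = β(β((T1 ⋈ T2) ⊎ T1) ⊎ T2). -/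
/- A tuple is a function from attributes to optional values (`none` = null). -/
variable {A V : Type*} [DecidableEq A] [DecidableEq V]

lemma mergeT_left {t1 t2 : A → Option V} {a : A} (h : t1 a ≠ none) :
    mergeT t1 t2 a = t1 a := by
  unfold mergeT
  cases h' : t1 a with
  | none => exact absurd h' h
  | some v => rfl

lemma mergeT_right {t1 t2 : A → Option V} {a : A} (h : t1 a = none) :
    mergeT t1 t2 a = t2 a := by
  unfold mergeT
  rw [h]

lemma mergeT_eq_none_iff {t1 t2 : A → Option V} {a : A} :
    mergeT t1 t2 a = none ↔ t1 a = none ∧ t2 a = none := by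
  unfold mergeT
  cases t1 a <;> simp

/-- Full Outer Join via Outer Union and Subsumption:
`T1 ⟗ T2 = β(β((T1 ⋈ T2) ⊎ T1) ⊎ T2)`. -/
theorem fullJoin_eq_beta_outerUnion
    (T1 T2 : Set (A → Option V)) (S1 S2 : Set A)
    (hfin1 : T1.Finite) (hfin2 : T2.Finite)
    (hs1 : HasSchema T1 S1) (hs2 : HasSchema T2 S2)
    (hC : (S1 ∩ S2).Nonempty)
    (hmin1 : MinimalForm T1) (hmin2 : MinimalForm T2)
    (hnn1 : ∀ t ∈ T1, ∀ a ∈ S1 ∩ S2, t a ≠ none)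
    (hnn2 : ∀ t ∈ T2, ∀ a ∈ S1 ∩ S2, t a ≠ none) :
    fullJoin (S1 ∩ S2) T1 T2
      = beta (beta (innerJoin (S1 ∩ S2) T1 T2 ∪ T1) ∪ T2) := by
  set C := S1 ∩ S2 with hCdef
  set J := innerJoin C T1 T2 with hJdef
  obtain ⟨c, hc⟩ := hC
  -- supports of tuples of T1 and T2 can only overlap inside C
  have overlap : ∀ t1 ∈ T1, ∀ t2 ∈ T2, ∀ a, t1 a ≠ none → t2 a ≠ none → a ∈ C := by
    intro t1 h1 t2 h2 a ha1 ha2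
    by_contra h
    rcases not_and_or.mp h with h' | h'
    · exact ha1 (hs1 t1 h1 a h')
    · exact ha2 (hs2 t2 h2 a h')
  -- a merge agrees with its right component on its support
  have merge_right_mem : ∀ t1 ∈ T1, ∀ t2 ∈ T2, Joinable C t1 t2 →
      ∀ a, t2 a ≠ none → mergeT t1 t2 a = t2 a := by
    intro t1 h1 t2 h2 hj a ha
    by_cases h1a : t1 a = none
    · exact mergeT_right h1a
    · rw [mergeT_left h1a]
      exact (hj a (overlap t1 h1 t2 h2 a h1a ha)).1
  -- no tuple of J ∪ T1 ∪ T2 subsumes a tuple of J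
  have no_sub_inner : ∀ x, (x ∈ J ∨ x ∈ T1 ∨ x ∈ T2) → ∀ m ∈ J, ¬ Subsumes x m := by
    rintro x hx m ⟨t1, ht1, t2, ht2, hj, rfl⟩ ⟨hag, a0, hxa0, hma0⟩
    obtain ⟨ht1a0, ht2a0⟩ := mergeT_eq_none_iff.mp hma0
    have hxt1 : ∀ a, t1 a ≠ none → x a = t1 a := by
      intro a ha
      have hm : mergeT t1 t2 a = t1 a := mergeT_left ha
      rw [hag a (by rw [hm]; exact ha), hm]
    have hxt2 : ∀ a, t2 a ≠ none → x a = t2 a := by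
      intro a ha
      have hm : mergeT t1 t2 a = t2 a := merge_right_mem t1 ht1 t2 ht2 hj a ha
      rw [hag a (by rw [hm]; exact ha), hm]
    rcases hx with hxJ | hxT1 | hxT2
    · obtain ⟨s1, hs1m, s2, hs2m, hjs, rfl⟩ := hxJ
      have hs12 : s1 a0 ≠ none ∨ s2 a0 ≠ none := by
        by_contra h
        push_neg at h
        exact hxa0 (mergeT_eq_none_iff.mpr ⟨h.1, h.2⟩)
      rcases hs12 with h1 | h2
      · -- compare s1 and t1 inside T1
        have agree : ∀ a, s1 a ≠ none → t1 a ≠ none → s1 a = t1 a := by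
          intro a hsa hta
          have := hxt1 a hta
          rwa [mergeT_left hsa] at this
        by_cases hcov : ∀ a, t1 a ≠ none → s1 a ≠ none
        · exact hmin1.1 s1 hs1m t1 ht1 ⟨fun a ha => agree a (hcov a ha) ha, a0, h1, ht1a0⟩
        · push_neg at hcov
          obtain ⟨a1, ha1, ha1'⟩ := hcov
          exact hmin1.2 s1 hs1m t1 ht1
            ⟨⟨c, agree c (hnn1 s1 hs1m c hc) (hnn1 t1 ht1 c hc), hnn1 s1 hs1m c hc⟩,
              agree, ⟨a0, h1, ht1a0⟩, ⟨a1, ha1, ha1'⟩⟩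
      · -- compare s2 and t2 inside T2
        have agree : ∀ a, s2 a ≠ none → t2 a ≠ none → s2 a = t2 a := by
          intro a hsa hta
          have := hxt2 a hta
          rwa [merge_right_mem s1 hs1m s2 hs2m hjs a hsa] at this
        by_cases hcov : ∀ a, t2 a ≠ none → s2 a ≠ none
        · exact hmin2.1 s2 hs2m t2 ht2 ⟨fun a ha => agree a (hcov a ha) ha, a0, h2, ht2a0⟩
        · push_neg at hcov
          obtain ⟨a1, ha1, ha1'⟩ := hcov
          exact hmin2.2 s2 hs2m t2 ht2
            ⟨⟨c, agree c (hnn2 s2 hs2m c hc) (hnn2 t2 ht2 c hc), hnn2 s2 hs2m c hc⟩,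
              agree, ⟨a0, h2, ht2a0⟩, ⟨a1, ha1, ha1'⟩⟩
    · exact hmin1.1 x hxT1 t1 ht1 ⟨hxt1, a0, hxa0, ht1a0⟩
    · exact hmin2.1 x hxT2 t2 ht2 ⟨hxt2, a0, hxa0, ht2a0⟩
  -- no tuple of J ∪ T1 ∪ T2 subsumes a dangling tuple of T1
  have no_sub_d1 : ∀ x, (x ∈ J ∨ x ∈ T1 ∨ x ∈ T2) → ∀ t1 ∈ T1,
      (¬ ∃ t2 ∈ T2, Joinable C t1 t2) → ¬ Subsumes x t1 := by
    rintro x hx t1 ht1 hd ⟨hag, a0, hxa0, ha0⟩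
    rcases hx with hxJ | hxT1 | hxT2
    · obtain ⟨s1, hs1m, s2, hs2m, hjs, rfl⟩ := hxJ
      refine hd ⟨s2, hs2m, fun a ha => ?_⟩
      have h1 : t1 a ≠ none := hnn1 t1 ht1 a ha
      have h2 : mergeT s1 s2 a = t1 a := hag a h1
      rw [mergeT_left (hnn1 s1 hs1m a ha)] at h2
      exact ⟨h2.symm.trans (hjs a ha).1, h1⟩
    · exact hmin1.1 x hxT1 t1 ht1 ⟨hag, a0, hxa0, ha0⟩
    · refine hd ⟨x, hxT2, fun a ha => ?_⟩
      have h1 : t1 a ≠ none := hnn1 t1 ht1 a ha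
      exact ⟨(hag a h1).symm, h1⟩
  -- no tuple of J ∪ T1 ∪ T2 subsumes a dangling tuple of T2
  have no_sub_d2 : ∀ x, (x ∈ J ∨ x ∈ T1 ∨ x ∈ T2) → ∀ t2 ∈ T2,
      (¬ ∃ t1 ∈ T1, Joinable C t1 t2) → ¬ Subsumes x t2 := by
    rintro x hx t2 ht2 hd ⟨hag, a0, hxa0, ha0⟩
    rcases hx with hxJ | hxT1 | hxT2
    · obtain ⟨s1, hs1m, s2, hs2m, hjs, rfl⟩ := hxJ
      refine hd ⟨s1, hs1m, fun a ha => ?_⟩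
      have h2 : t2 a ≠ none := hnn2 t2 ht2 a ha
      have h1 : mergeT s1 s2 a = t2 a := hag a h2
      rw [mergeT_left (hnn1 s1 hs1m a ha)] at h1
      exact ⟨h1, h1 ▸ h2⟩
    · refine hd ⟨x, hxT1, fun a ha => ?_⟩
      have h2 : t2 a ≠ none := hnn2 t2 ht2 a ha
      have h1 : x a = t2 a := hag a h2
      exact ⟨h1, h1 ▸ h2⟩
    · exact hmin2.1 x hxT2 t2 ht2 ⟨hag, a0, hxa0, ha0⟩
  -- step 1: β(J ∪ T1) = leftJoin = J ∪ D1
  have hstep1 : beta (J ∪ T1) = J ∪ {t1 ∈ T1 | ¬ ∃ t2 ∈ T2, Joinable C t1 t2} := by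
    ext x
    constructor
    · rintro ⟨hx, hns⟩
      rcases hx with hxJ | hxT1
      · exact Or.inl hxJ
      · by_cases hp : ∃ t2 ∈ T2, Joinable C x t2
        · obtain ⟨t2, ht2, hj⟩ := hp
          by_cases heq : mergeT x t2 = x
          · exact Or.inl ⟨x, hxT1, t2, ht2, hj, heq.symm⟩
          · exfalso
            apply hns
            refine ⟨mergeT x t2, Or.inl ⟨x, hxT1, t2, ht2, hj, rfl⟩,
              fun a ha => mergeT_left ha, ?_⟩
            by_contra hno
            push_neg at hno
            apply heq
            funext a
            by_cases hxa : x a = none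
            · by_cases hm : mergeT x t2 a = none
              · rw [hm, hxa]
              · exact absurd hxa (hno a hm)
            · rw [mergeT_left hxa]
        · exact Or.inr ⟨hxT1, hp⟩
    · intro hx
      have hmem : x ∈ J ∪ T1 := by
        rcases hx with hxJ | hxD
        · exact Or.inl hxJ
        · exact Or.inr hxD.1
      refine ⟨hmem, ?_⟩
      rintro ⟨x', hx', hsub⟩
      have hx'3 : x' ∈ J ∨ x' ∈ T1 ∨ x' ∈ T2 := by
        rcases hx' with h | h
        · exact Or.inl h
        · exact Or.inr (Or.inl h)
      rcases hx with hxJ | hxD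
      · exact no_sub_inner x' hx'3 x hxJ hsub
      · exact no_sub_d1 x' hx'3 x hxD.1 hxD.2 hsub
  rw [hstep1]
  -- step 2: fullJoin = β((J ∪ D1) ∪ T2)
  ext x
  constructor
  · intro hx
    have hmem : x ∈ (J ∪ {t1 ∈ T1 | ¬ ∃ t2 ∈ T2, Joinable C t1 t2}) ∪ T2 := by
      rcases hx with (hxJ | hxD1) | hxD2
      · exact Or.inl (Or.inl hxJ)
      · exact Or.inl (Or.inr hxD1)
      · exact Or.inr hxD2.1
    refine ⟨hmem, ?_⟩
    rintro ⟨x', hx', hsub⟩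
    have hx'3 : x' ∈ J ∨ x' ∈ T1 ∨ x' ∈ T2 := by
      rcases hx' with (h | h) | h
      · exact Or.inl h
      · exact Or.inr (Or.inl h.1)
      · exact Or.inr (Or.inr h)
    rcases hx with (hxJ | hxD1) | hxD2
    · exact no_sub_inner x' hx'3 x hxJ hsub
    · exact no_sub_d1 x' hx'3 x hxD1.1 hxD1.2 hsub
    · exact no_sub_d2 x' hx'3 x hxD2.1 hxD2.2 hsub
  · rintro ⟨hx, hns⟩
    rcases hx with (hxJ | hxD1) | hxT2
    · exact Or.inl (Or.inl hxJ)
    · exact Or.inl (Or.inr hxD1)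
    · by_cases hp : ∃ t1 ∈ T1, Joinable C t1 x
      · obtain ⟨t1, ht1, hj⟩ := hp
        by_cases heq : mergeT t1 x = x
        · exact Or.inl (Or.inl ⟨t1, ht1, x, hxT2, hj, heq.symm⟩)
        · exfalso
          apply hns
          refine ⟨mergeT t1 x, Or.inl (Or.inl ⟨t1, ht1, x, hxT2, hj, rfl⟩),
            fun a ha => merge_right_mem t1 ht1 x hxT2 hj a ha, ?_⟩
          by_contra hno
          push_neg at hno
          apply heq
          funext a
          by_cases hxa : x a = none
          · by_cases hm : mergeT t1 x a = none
            · rw [hm, hxa]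
            · exact absurd hxa (hno a hm)
          · rw [merge_right_mem t1 ht1 x hxT2 hj a hxa]
      · exact Or.inr ⟨hxT2, hp⟩
end

section
/- (Left Join lemma, containment direction 1.) Let T1 and T2 be tables with schemas S1 and S2 and common columns C = S1 ∩ S2 with C nonempty. Assume T1 and T2 are each in minimal form and every tuple of T1 and of T2 is non-null on every attribute of C. Then every tuple of T1 ⟕ T2 belongs to β((T1 ⋈ T2) ⊎ T1). -/
/- A tuple is a function from attributes to optional values (`none` = null). -/
variable {A V : Type*} [DecidableEq A] [DecidableEq V]

lemma mergeT_none {t1 t2 : A → Option V} {a : A} (h : mergeT t1 t2 a = none) :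
    t1 a = none ∧ t2 a = none := by
  unfold mergeT at h
  cases h' : t1 a with
  | none => rw [h'] at h; exact ⟨rfl, h⟩
  | some v => rw [h'] at h; simp at h

/-- Left Join lemma, containment direction 1:
every tuple of `T1 ⟕ T2` belongs to `β((T1 ⋈ T2) ⊎ T1)`. -/
theorem leftJoin_subset_beta_outerUnion
    (T1 T2 : Set (A → Option V)) (S1 S2 : Set A)
    (hfin1 : T1.Finite) (hfin2 : T2.Finite)
    (hs1 : HasSchema T1 S1) (hs2 : HasSchema T2 S2)
    (hC : (S1 ∩ S2).Nonempty)
    (hmin1 : MinimalForm T1) (hmin2 : MinimalForm T2)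
    (hnn1 : ∀ t ∈ T1, ∀ a ∈ S1 ∩ S2, t a ≠ none)
    (hnn2 : ∀ t ∈ T2, ∀ a ∈ S1 ∩ S2, t a ≠ none) :
    ∀ t ∈ leftJoin (S1 ∩ S2) T1 T2, t ∈ beta (innerJoin (S1 ∩ S2) T1 T2 ∪ T1) := by
  intro t ht
  rcases ht with hin | ⟨ht1, hnj⟩
  · -- t comes from the inner join
    obtain ⟨t1, ht1, t2, ht2, hj, rfl⟩ := hin
    refine ⟨Or.inl ⟨t1, ht1, t2, ht2, hj, rfl⟩, ?_⟩
    rintro ⟨t', ht', hsub⟩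
    rcases ht' with ⟨s1, hm1, s2, hm2, hjs, rfl⟩ | ht'
    · -- t' = mergeT s1 s2 ; show s1 = t1 and s2 = t2, contradiction
      have hag1 : ∀ a, t1 a ≠ none → s1 a = t1 a := by
        intro a ha
        have hma : mergeT t1 t2 a = t1 a := mergeT_left ha
        have htn : mergeT t1 t2 a ≠ none := by rw [hma]; exact ha
        have h1 : mergeT s1 s2 a = t1 a := by rw [hsub.1 a htn, hma]
        by_cases hs1a : s1 a = none
        · exfalso
          rw [mergeT_right hs1a] at h1
          have hs2a : s2 a ≠ none := by rw [h1]; exact ha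
          have haS2 : a ∈ S2 := by
            by_contra hc; exact hs2a (hs2 s2 hm2 a hc)
          have haS1 : a ∈ S1 := by
            by_contra hc; exact ha (hs1 t1 ht1 a hc)
          exact hnn1 s1 hm1 a ⟨haS1, haS2⟩ hs1a
        · rw [mergeT_left hs1a] at h1; exact h1
      have hnw1 : ∀ a, s1 a ≠ none → t1 a ≠ none := by
        intro a hsa hta
        exact hmin1.1 s1 hm1 t1 ht1 ⟨hag1, a, hsa, hta⟩
      have he1 : s1 = t1 := by
        funext a
        by_cases hta : t1 a = none
        · rw [hta]
          by_contra hc; exact hnw1 a hc hta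
        · exact hag1 a hta
      have hag2 : ∀ a, t2 a ≠ none → s2 a = t2 a := by
        intro a ha
        have haS2 : a ∈ S2 := by
          by_contra hc; exact ha (hs2 t2 ht2 a hc)
        by_cases haS1 : a ∈ S1
        · have hC : a ∈ S1 ∩ S2 := ⟨haS1, haS2⟩
          have h1 := (hjs a hC).1
          have h2 := (hj a hC).1
          rw [← h1, he1, h2]
        · have ht1a : t1 a = none := hs1 t1 ht1 a haS1
          have hs1a : s1 a = none := hs1 s1 hm1 a haS1
          have hma : mergeT t1 t2 a = t2 a := mergeT_right ht1a
          have htn : mergeT t1 t2 a ≠ none := by rw [hma]; exact ha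
          have h1 : mergeT s1 s2 a = t2 a := by rw [hsub.1 a htn, hma]
          rw [mergeT_right hs1a] at h1; exact h1
      have hnw2 : ∀ a, s2 a ≠ none → t2 a ≠ none := by
        intro a hsa hta
        exact hmin2.1 s2 hm2 t2 ht2 ⟨hag2, a, hsa, hta⟩
      have he2 : s2 = t2 := by
        funext a
        by_cases hta : t2 a = none
        · rw [hta]
          by_contra hc; exact hnw2 a hc hta
        · exact hag2 a hta
      obtain ⟨a, hne, hno⟩ := hsub.2
      rw [he1, he2] at hne
      exact hne hno
    · -- t' ∈ T1 subsumes mergeT t1 t2 ⇒ t' subsumes t1, contra minimality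
      apply hmin1.1 t' ht' t1 ht1
      constructor
      · intro a ha
        have hma : mergeT t1 t2 a = t1 a := mergeT_left ha
        have htn : mergeT t1 t2 a ≠ none := by rw [hma]; exact ha
        rw [hsub.1 a htn, hma]
      · obtain ⟨a, hne, hno⟩ := hsub.2
        exact ⟨a, hne, (mergeT_none hno).1⟩
  · -- t = t1 ∈ T1, no joinable partner
    refine ⟨Or.inr ht1, ?_⟩
    rintro ⟨t', ht', hsub⟩
    rcases ht' with ⟨s1, hm1, s2, hm2, hjs, rfl⟩ | ht'
    · -- then t and s2 would be joinable
      apply hnj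
      refine ⟨s2, hm2, fun a ha => ?_⟩
      have hta : t a ≠ none := hnn1 t ht1 a ha
      have hs1a : s1 a ≠ none := hnn1 s1 hm1 a ha
      have h1 : mergeT s1 s2 a = t a := hsub.1 a hta
      rw [mergeT_left hs1a] at h1
      have := (hjs a ha).1
      exact ⟨by rw [← h1, this], hta⟩
    · exact hmin1.1 t' ht' t ht1 hsub
end

section
/- (Left Join lemma, containment direction 2.) Let T1 and T2 be tables with schemas S1 and S2 and common columns C = S1 ∩ S2 with C nonempty. Assume T1 and T2 are each in minimal form and every tuple of T1 and of T2 is non-null on every attribute of C. Then every tuple of β((T1 ⋈ T2) ⊎ T1) belongs to T1 ⟕ T2. -/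
/- A tuple is a function from attributes to optional values (`none` = null). -/
variable {A V : Type*} [DecidableEq A] [DecidableEq V]

/-- Left Join lemma, containment direction 2:
every tuple of `β((T1 ⋈ T2) ⊎ T1)` belongs to `T1 ⟕ T2`. -/
theorem beta_outerUnion_subset_leftJoin
    (T1 T2 : Set (A → Option V)) (S1 S2 : Set A)
    (hfin1 : T1.Finite) (hfin2 : T2.Finite)
    (hs1 : HasSchema T1 S1) (hs2 : HasSchema T2 S2)
    (hC : (S1 ∩ S2).Nonempty)
    (hmin1 : MinimalForm T1) (hmin2 : MinimalForm T2)
    (hnn1 : ∀ t ∈ T1, ∀ a ∈ S1 ∩ S2, t a ≠ none)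
    (hnn2 : ∀ t ∈ T2, ∀ a ∈ S1 ∩ S2, t a ≠ none) :
    ∀ t ∈ beta (innerJoin (S1 ∩ S2) T1 T2 ∪ T1), t ∈ leftJoin (S1 ∩ S2) T1 T2 := by
  rintro t ⟨htU, hns⟩
  rcases htU with hin | ht1
  · exact Or.inl hin
  · by_cases h : ∃ t2 ∈ T2, Joinable (S1 ∩ S2) t t2
    · obtain ⟨t2, ht2, hj⟩ := h
      set m := mergeT t t2 with hm
      have hmem : m ∈ innerJoin (S1 ∩ S2) T1 T2 := ⟨t, ht1, t2, ht2, hj, rfl⟩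
      have hmt : ∀ a, t a ≠ none → m a = t a := by
        intro a ha
        simp only [hm, mergeT]
        cases ht : t a with
        | none => exact absurd ht ha
        | some v => rfl
      have hnosub : ¬ ∃ a, m a ≠ none ∧ t a = none := by
        intro ⟨a, ha⟩
        exact hns ⟨m, Or.inl hmem, hmt, a, ha⟩
      push_neg at hnosub
      have : m = t := by
        funext a
        cases ht : t a with
        | none =>
          have : m a = none := by
            by_contra hne
            exact hnosub a hne ht
          rw [this]
        | some v => rw [hmt a (by simp [ht]), ht]
      exact Or.inl (this ▸ hmem)
    · exact Or.inr ⟨ht1, h⟩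
end

section
/- (Full Outer Join lemma, containment direction 1.) Let T1 and T2 be tables with schemas S1 and S2 and common columns C = S1 ∩ S2 with C nonempty. Assume T1 and T2 are each in minimal form and every tuple of T1 and of T2 is non-null on every attribute of C. Then every tuple of T1 ⟗ T2 belongs to β(β((T1 ⋈ T2) ⊎ T1) ⊎ T2). -/
/- A tuple is a function from attributes to optional values (`none` = null). -/
variable {A V : Type*} [DecidableEq A] [DecidableEq V]

/-- Full Outer Join lemma, containment direction 1:
every tuple of `T1 ⟗ T2` belongs to `β(β((T1 ⋈ T2) ⊎ T1) ⊎ T2)`. -/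
theorem fullJoin_subset_beta_outerUnion
    (T1 T2 : Set (A → Option V)) (S1 S2 : Set A)
    (hfin1 : T1.Finite) (hfin2 : T2.Finite)
    (hs1 : HasSchema T1 S1) (hs2 : HasSchema T2 S2)
    (hC : (S1 ∩ S2).Nonempty)
    (hmin1 : MinimalForm T1) (hmin2 : MinimalForm T2)
    (hnn1 : ∀ t ∈ T1, ∀ a ∈ S1 ∩ S2, t a ≠ none)
    (hnn2 : ∀ t ∈ T2, ∀ a ∈ S1 ∩ S2, t a ≠ none) :
    ∀ t ∈ fullJoin (S1 ∩ S2) T1 T2,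
      t ∈ beta (beta (innerJoin (S1 ∩ S2) T1 T2 ∪ T1) ∪ T2) := by
  set C := S1 ∩ S2 with hCdef
  set J := innerJoin C T1 T2 with hJdef
  -- merge restricted to S1 is t1
  have hmerge1 : ∀ t1 ∈ T1, ∀ t2 ∈ T2, Joinable C t1 t2 →
      ∀ a ∈ S1, mergeT t1 t2 a = t1 a := by
    intro t1 h1 t2 h2 hj a ha
    by_cases hn : t1 a = none
    · rw [mergeT_right hn, hn]
      by_cases ha2 : a ∈ S2
      · exact absurd hn (hnn1 t1 h1 a ⟨ha, ha2⟩)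
      · exact hs2 t2 h2 a ha2
    · exact mergeT_left hn
  -- merge restricted to S2 is t2
  have hmerge2 : ∀ t1 ∈ T1, ∀ t2 ∈ T2, Joinable C t1 t2 →
      ∀ a ∈ S2, mergeT t1 t2 a = t2 a := by
    intro t1 h1 t2 h2 hj a ha
    by_cases hn : t1 a = none
    · exact mergeT_right hn
    · have ha1 : a ∈ S1 := by
        by_contra hc; exact hn (hs1 t1 h1 a hc)
      rw [mergeT_left hn]
      exact (hj a ⟨ha1, ha⟩).1
  -- merge is null outside S1 ∪ S2
  have hmergeOut : ∀ t1 ∈ T1, ∀ t2 ∈ T2, ∀ a, a ∉ S1 → a ∉ S2 →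
      mergeT t1 t2 a = none := by
    intro t1 h1 t2 h2 a ha1 ha2
    rw [mergeT_right (hs1 t1 h1 a ha1)]
    exact hs2 t2 h2 a ha2
  -- Sub-lemma B: nothing in J ∪ T1 ∪ T2 subsumes an element of J
  have hB : ∀ t1 ∈ T1, ∀ t2 ∈ T2, Joinable C t1 t2 →
      ∀ t' ∈ J ∪ T1 ∪ T2, ¬ Subsumes t' (mergeT t1 t2) := by
    intro t1 h1 t2 h2 hj t' ht' hsub
    obtain ⟨hag, a0, h0ne, h0null⟩ := hsub
    rcases ht' with (hJ' | hT1') | hT2'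
    · -- t' ∈ J
      obtain ⟨t1', h1', t2', h2', hj', rfl⟩ := hJ'
      have hsub1 : ∀ b, t1 b ≠ none → t1' b = t1 b := by
        intro b hb
        have hbS1 : b ∈ S1 := by
          by_contra hc; exact hb (hs1 t1 h1 b hc)
        have hm : mergeT t1 t2 b = t1 b := hmerge1 t1 h1 t2 h2 hj b hbS1
        have := hag b (by rw [hm]; exact hb)
        rw [hmerge1 t1' h1' t2' h2' hj' b hbS1] at this
        rw [this, hm]
      have hsub2 : ∀ b, t2 b ≠ none → t2' b = t2 b := by
        intro b hb
        have hbS2 : b ∈ S2 := by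
          by_contra hc; exact hb (hs2 t2 h2 b hc)
        have hm : mergeT t1 t2 b = t2 b := hmerge2 t1 h1 t2 h2 hj b hbS2
        have := hag b (by rw [hm]; exact hb)
        rw [hmerge2 t1' h1' t2' h2' hj' b hbS2] at this
        rw [this, hm]
      by_cases ha1 : a0 ∈ S1
      · have hne' : t1' a0 ≠ none := by
          rw [← hmerge1 t1' h1' t2' h2' hj' a0 ha1]; exact h0ne
        have hnull' : t1 a0 = none := by
          rw [← hmerge1 t1 h1 t2 h2 hj a0 ha1]; exact h0null
        exact hmin1.1 t1' h1' t1 h1 ⟨hsub1, a0, hne', hnull'⟩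
      · by_cases ha2 : a0 ∈ S2
        · have hne' : t2' a0 ≠ none := by
            rw [← hmerge2 t1' h1' t2' h2' hj' a0 ha2]; exact h0ne
          have hnull' : t2 a0 = none := by
            rw [← hmerge2 t1 h1 t2 h2 hj a0 ha2]; exact h0null
          exact hmin2.1 t2' h2' t2 h2 ⟨hsub2, a0, hne', hnull'⟩
        · exact h0ne (hmergeOut t1' h1' t2' h2' a0 ha1 ha2)
    · -- t' ∈ T1
      by_cases hall : ∀ b, t2 b ≠ none → b ∈ S1
      · have heq : mergeT t1 t2 = t1 := by
          funext b
          by_cases hn : t1 b = none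
          · rw [mergeT_right hn, hn]
            by_contra hc
            have hbS1 : b ∈ S1 := hall b hc
            have hbS2 : b ∈ S2 := by
              by_contra hc2; exact hc (hs2 t2 h2 b hc2)
            exact hnn1 t1 h1 b ⟨hbS1, hbS2⟩ hn
          · exact mergeT_left hn
        rw [heq] at hag h0null
        exact hmin1.1 t' hT1' t1 h1 ⟨hag, a0, h0ne, h0null⟩
      · push_neg at hall
        obtain ⟨b, hb, hbS1⟩ := hall
        have hm : mergeT t1 t2 b ≠ none := by
          by_cases hn : t1 b = none
          · rw [mergeT_right hn]; exact hb
          · rw [mergeT_left hn]; exact hn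
        have := hag b hm
        rw [hs1 t' hT1' b hbS1] at this
        exact hm this.symm
    · -- t' ∈ T2
      by_cases hall : ∀ b, t1 b ≠ none → b ∈ S2
      · have heq : mergeT t1 t2 = t2 := by
          funext b
          by_cases hn : t1 b = none
          · exact mergeT_right hn
          · have hbS2 : b ∈ S2 := hall b hn
            have hbS1 : b ∈ S1 := by
              by_contra hc; exact hn (hs1 t1 h1 b hc)
            rw [mergeT_left hn]
            exact (hj b ⟨hbS1, hbS2⟩).1
        rw [heq] at hag h0null
        exact hmin2.1 t' hT2' t2 h2 ⟨hag, a0, h0ne, h0null⟩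
      · push_neg at hall
        obtain ⟨b, hb, hbS2⟩ := hall
        have hm : mergeT t1 t2 b ≠ none := by
          rw [mergeT_left hb]; exact hb
        have := hag b hm
        rw [hs2 t' hT2' b hbS2] at this
        exact hm this.symm
  -- Sub-lemma C: if t1 ∈ T1 has no joinable partner, nothing subsumes it
  have hCsub : ∀ t1 ∈ T1, (¬ ∃ t2 ∈ T2, Joinable C t1 t2) →
      ∀ t' ∈ J ∪ T1 ∪ T2, ¬ Subsumes t' t1 := by
    intro t1 h1 hno t' ht' hsub
    obtain ⟨hag, a0, h0ne, h0null⟩ := hsub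
    rcases ht' with (hJ' | hT1') | hT2'
    · obtain ⟨t1', h1', t2', h2', hj', rfl⟩ := hJ'
      apply hno
      refine ⟨t2', h2', fun a ha => ?_⟩
      have hne := hnn1 t1 h1 a ha
      have := hag a hne
      rw [hmerge2 t1' h1' t2' h2' hj' a ha.2] at this
      exact ⟨this.symm, hne⟩
    · exact hmin1.1 t' hT1' t1 h1 ⟨hag, a0, h0ne, h0null⟩
    · apply hno
      refine ⟨t', hT2', fun a ha => ?_⟩
      have hne := hnn1 t1 h1 a ha
      exact ⟨(hag a hne).symm, hne⟩
  -- Sub-lemma D: if t2 ∈ T2 has no joinable partner, nothing subsumes it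
  have hDsub : ∀ t2 ∈ T2, (¬ ∃ t1 ∈ T1, Joinable C t1 t2) →
      ∀ t' ∈ J ∪ T1 ∪ T2, ¬ Subsumes t' t2 := by
    intro t2 h2 hno t' ht' hsub
    obtain ⟨hag, a0, h0ne, h0null⟩ := hsub
    rcases ht' with (hJ' | hT1') | hT2'
    · obtain ⟨t1', h1', t2', h2', hj', rfl⟩ := hJ'
      apply hno
      refine ⟨t1', h1', fun a ha => ?_⟩
      have hne := hnn2 t2 h2 a ha
      have := hag a hne
      rw [hmerge1 t1' h1' t2' h2' hj' a ha.1] at this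
      exact ⟨this, by rw [this]; exact hne⟩
    · apply hno
      refine ⟨t', hT1', fun a ha => ?_⟩
      have hne := hnn2 t2 h2 a ha
      have := hag a hne
      exact ⟨this, by rw [this]; exact hne⟩
    · exact hmin2.1 t' hT2' t2 h2 ⟨hag, a0, h0ne, h0null⟩
  -- main proof
  intro t ht
  rcases ht with (hJ | hL) | hR
  · -- t ∈ J
    obtain ⟨t1, h1, t2, h2, hj, rfl⟩ := hJ
    have hstep1 : mergeT t1 t2 ∈ beta (J ∪ T1) := by
      refine ⟨Or.inl ⟨t1, h1, t2, h2, hj, rfl⟩, ?_⟩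
      rintro ⟨t', ht', hsub⟩
      exact hB t1 h1 t2 h2 hj t'
        (ht'.elim (fun h => Or.inl (Or.inl h)) (fun h => Or.inl (Or.inr h))) hsub
    refine ⟨Or.inl hstep1, ?_⟩
    rintro ⟨t', ht', hsub⟩
    refine hB t1 h1 t2 h2 hj t' ?_ hsub
    rcases ht' with hb | h2'
    · exact hb.1.elim (fun h => Or.inl (Or.inl h)) (fun h => Or.inl (Or.inr h))
    · exact Or.inr h2'
  · -- t ∈ T1, no partner
    obtain ⟨h1, hno⟩ := hL
    have hstep1 : t ∈ beta (J ∪ T1) := by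
      refine ⟨Or.inr h1, ?_⟩
      rintro ⟨t', ht', hsub⟩
      exact hCsub t h1 hno t'
        (ht'.elim (fun h => Or.inl (Or.inl h)) (fun h => Or.inl (Or.inr h))) hsub
    refine ⟨Or.inl hstep1, ?_⟩
    rintro ⟨t', ht', hsub⟩
    refine hCsub t h1 hno t' ?_ hsub
    rcases ht' with hb | h2'
    · exact hb.1.elim (fun h => Or.inl (Or.inl h)) (fun h => Or.inl (Or.inr h))
    · exact Or.inr h2'
  · -- t ∈ T2, no partner
    obtain ⟨h2, hno⟩ := hR
    refine ⟨Or.inr h2, ?_⟩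
    rintro ⟨t', ht', hsub⟩
    refine hDsub t h2 hno t' ?_ hsub
    rcases ht' with hb | h2'
    · exact hb.1.elim (fun h => Or.inl (Or.inl h)) (fun h => Or.inl (Or.inr h))
    · exact Or.inr h2'
end

section
/- (Full Outer Join lemma, right-dangling case.) Let T1 and T2 be tables with schemas S1 and S2 and common columns C = S1 ∩ S2 with C nonempty. Assume T1 and T2 are each in minimal form and every tuple of T1 and of T2 is non-null on every attribute of C. If t2 ∈ T2 has no joinable tuple in T1, then t2 ∈ β(β((T1 ⋈ T2) ⊎ T1) ⊎ T2), i.e., t2 survives both subsumption steps. -/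
/- A tuple is a function from attributes to optional values (`none` = null). -/
variable {A V : Type*} [DecidableEq A] [DecidableEq V]

/-- Full Outer Join lemma, right-dangling case: a tuple of `T2` with no joinable
tuple in `T1` survives both subsumption steps. -/
theorem rightDangling_mem_beta
    (T1 T2 : Set (A → Option V)) (S1 S2 : Set A)
    (hfin1 : T1.Finite) (hfin2 : T2.Finite)
    (hs1 : HasSchema T1 S1) (hs2 : HasSchema T2 S2)
    (hC : (S1 ∩ S2).Nonempty)
    (hmin1 : MinimalForm T1) (hmin2 : MinimalForm T2)
    (hnn1 : ∀ t ∈ T1, ∀ a ∈ S1 ∩ S2, t a ≠ none)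
    (hnn2 : ∀ t ∈ T2, ∀ a ∈ S1 ∩ S2, t a ≠ none)
    (t2 : A → Option V) (ht2 : t2 ∈ T2)
    (hdangling : ¬ ∃ t1 ∈ T1, Joinable (S1 ∩ S2) t1 t2) :
    t2 ∈ beta (beta (innerJoin (S1 ∩ S2) T1 T2 ∪ T1) ∪ T2) := by
  refine ⟨Or.inr ht2, ?_⟩
  rintro ⟨t', ht', hsub⟩
  have key : ∀ a ∈ S1 ∩ S2, t' a = t2 a ∧ t' a ≠ none := by
    intro a ha
    have h2 := hnn2 t2 ht2 a ha
    have heq := hsub.1 a h2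
    exact ⟨heq, heq ▸ h2⟩
  rcases ht' with hb | hT2
  · rcases hb.1 with hJ | hT1
    · obtain ⟨s1, hs1', s2, hs2', hjoin, rfl⟩ := hJ
      apply hdangling
      refine ⟨s1, hs1', fun a ha => ?_⟩
      have h1 := hnn1 s1 hs1' a ha
      have hm : mergeT s1 s2 a = s1 a := by
        unfold mergeT
        cases h : s1 a with
        | none => exact absurd h h1
        | some v => simp [h]
      obtain ⟨heq, hne⟩ := key a ha
      rw [hm] at heq hne
      exact ⟨heq, hne⟩
    · exact hdangling ⟨t', hT1, fun a ha => key a ha⟩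
  · exact hmin2.1 t' hT2 t2 ht2 hsub
end

section
/- (Left Join lemma, dangling-tuple case.) Let T1 and T2 be tables with schemas S1 and S2 and common columns C = S1 ∩ S2 with C nonempty. Assume T1 and T2 are each in minimal form and every tuple of T1 and of T2 is non-null on every attribute of C. If t1 ∈ T1 has no joinable tuple in T2, then t1 is not subsumed by any tuple of (T1 ⋈ T2) ⊎ T1; consequently t1 ∈ β((T1 ⋈ T2) ⊎ T1). -/
/- A tuple is a function from attributes to optional values (`none` = null). -/
variable {A V : Type*} [DecidableEq A] [DecidableEq V]

/-- Left Join lemma, dangling-tuple case: a tuple of `T1` with no joinable tuple in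
`T2` is not subsumed by any tuple of `(T1 ⋈ T2) ⊎ T1`; consequently it is in
`β((T1 ⋈ T2) ⊎ T1)`. -/
theorem dangling_mem_beta
    (T1 T2 : Set (A → Option V)) (S1 S2 : Set A)
    (hfin1 : T1.Finite) (hfin2 : T2.Finite)
    (hs1 : HasSchema T1 S1) (hs2 : HasSchema T2 S2)
    (hC : (S1 ∩ S2).Nonempty)
    (hmin1 : MinimalForm T1) (hmin2 : MinimalForm T2)
    (hnn1 : ∀ t ∈ T1, ∀ a ∈ S1 ∩ S2, t a ≠ none)
    (hnn2 : ∀ t ∈ T2, ∀ a ∈ S1 ∩ S2, t a ≠ none)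
    (t1 : A → Option V) (ht1 : t1 ∈ T1)
    (hdangling : ¬ ∃ t2 ∈ T2, Joinable (S1 ∩ S2) t1 t2) :
    (∀ t' ∈ innerJoin (S1 ∩ S2) T1 T2 ∪ T1, ¬ Subsumes t' t1) ∧
    t1 ∈ beta (innerJoin (S1 ∩ S2) T1 T2 ∪ T1) := by
  have key : ∀ t' ∈ innerJoin (S1 ∩ S2) T1 T2 ∪ T1, ¬ Subsumes t' t1 := by
    rintro t' (⟨u1, hu1, u2, hu2, hj, rfl⟩ | ht') hsub
    · apply hdangling
      refine ⟨u2, hu2, fun a ha => ?_⟩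
      have h1 : u1 a = u2 a ∧ u1 a ≠ none := hj a ha
      have hnn : t1 a ≠ none := hnn1 t1 ht1 a ha
      have hm : mergeT u1 u2 a = u1 a := by
        unfold mergeT
        cases h : u1 a with
        | none => exact absurd h h1.2
        | some v => rfl
      have := hsub.1 a hnn
      rw [hm] at this
      constructor
      · rw [← this, h1.1]
      · rw [← this]; exact h1.2
    · exact hmin1.1 t' ht' t1 ht1 hsub
  exact ⟨key, Or.inr ht1, fun ⟨t', ht', hsub⟩ => key t' ht' hsub⟩
end

section
/- (Error-aware similarity favors nulls over erroneous values.) Let s, t : Fin n → Option V with n ≥ 1, and let a be an attribute with t a ≠ none and t a ≠ s a (an erroneous value of t at a). Let t' be the tuple with t' a = none and t' i = t i for all i ≠ a. Then E(s,t') ≥ E(s,t) + 1/n; in particular, nullifying a mismatching non-null value strictly increases the error-aware tuple similarity. -/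
/-! Nullifying the erroneous value `t a` loses no agreement with `s` (there was none at `a`)
and removes exactly one error, so `α − δ` rises by at least one. -/

/- Values with decidable equality; tuples over `n` non-key attributes are
functions `Fin n → Option V`, where `none` represents a null. -/
variable {V : Type*} [DecidableEq V]

/-- `α(s,t)`: the number of attributes on which `s` and `t` share the same value
(two nulls count as equal). -/
def alphaCount {n : ℕ} (s t : Fin n → Option V) : ℕ :=
  (Finset.univ.filter fun i => s i = t i).card

/-- `δ(s,t)`: the number of attributes on which `s` and `t` differ and `t` is non-null. -/
def deltaCount {n : ℕ} (s t : Fin n → Option V) : ℕ :=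
  (Finset.univ.filter fun i => s i ≠ t i ∧ t i ≠ none).card

/-- The error-aware tuple similarity `E(s,t) = (α(s,t) − δ(s,t))/n`. -/
def errSim {n : ℕ} (s t : Fin n → Option V) : ℚ :=
  ((alphaCount s t : ℚ) - (deltaCount s t : ℚ)) / n

section Nullify

variable {n : ℕ} {s t : Fin n → Option V} {a : Fin n}

theorem alphaCount_le_alphaCount_update_none (hmis : t a ≠ s a) :
    alphaCount s t ≤ alphaCount s (Function.update t a none) := by
  refine Finset.card_le_card fun i hi => ?_
  simp only [Finset.mem_filter, Finset.mem_univ, true_and] at hi ⊢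
  have hia : i ≠ a := by
    rintro rfl
    exact hmis hi.symm
  rwa [Function.update_of_ne hia]

theorem deltaCount_update_none_add_one (hnn : t a ≠ none) (hmis : t a ≠ s a) :
    deltaCount s (Function.update t a none) + 1 = deltaCount s t := by
  have ha : a ∈ Finset.univ.filter fun i => s i ≠ t i ∧ t i ≠ none := by
    simpa using ⟨Ne.symm hmis, hnn⟩
  have herase : (Finset.univ.filter fun i => s i ≠ Function.update t a none i ∧
      Function.update t a none i ≠ none) =
      (Finset.univ.filter fun i => s i ≠ t i ∧ t i ≠ none).erase a := by
    ext i
    by_cases hia : i = a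
    · subst hia
      simp
    · simp [hia]
  rw [deltaCount, deltaCount, herase, Finset.card_erase_add_one ha]

theorem errSim_add_inv_le_errSim_update_none (hnn : t a ≠ none) (hmis : t a ≠ s a) :
    errSim s t + 1 / (n : ℚ) ≤ errSim s (Function.update t a none) := by
  have halpha : (alphaCount s t : ℚ) ≤ alphaCount s (Function.update t a none) := by
    exact_mod_cast alphaCount_le_alphaCount_update_none hmis
  have hdelta : (deltaCount s (Function.update t a none) : ℚ) + 1 = deltaCount s t := by
    exact_mod_cast deltaCount_update_none_add_one hnn hmis
  rw [errSim, errSim, ← add_div]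
  gcongr
  linarith

end Nullify

theorem errSim_nullify_general {n : ℕ} (s t : Fin n → Option V) (a : Fin n)
    (hnn : t a ≠ none) (hmis : t a ≠ s a) :
    errSim s (Function.update t a none) ≥ errSim s t + 1 / (n : ℚ) ∧
    errSim s t < errSim s (Function.update t a none) := by
  have hgain := errSim_add_inv_le_errSim_update_none hnn hmis
  have hpos : (0 : ℚ) < 1 / n := by
    have : (0 : ℚ) < n := by exact_mod_cast a.pos
    positivity
  exact ⟨hgain, by linarith⟩

/-- Error-aware similarity favors nulls over erroneous values: nullifying a
mismatching non-null value of `t` increases `E` by at least `1/n`, and in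
particular strictly increases it. -/
theorem errSim_nullify {n : ℕ} (hn : 1 ≤ n) (s t : Fin n → Option V) (a : Fin n)
    (hnn : t a ≠ none) (hmis : t a ≠ s a) :
    errSim s (Function.update t a none) ≥ errSim s t + 1 / (n : ℚ) ∧
    errSim s t < errSim s (Function.update t a none) :=
  errSim_nullify_general s t a hnn hmis
end
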